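/- arXiv:1206.0439 — 2 statements merged into one kernel-verified Lean document; each statement's English description precedes it below -/
import Mathlib

section
/- Let N be a positive integer, W a finite-dimensional real vector space, and D a linear endomorphism of W. A function f : ZMod N → W lies in the kernel of the operator L̂_D (given by (L̂_D f)(t) = N·(exp(D/N)(f(t+1)) − f(t))) if and only if exp(D)(f(0)) = f(0) and f(k mod N) = exp(−(k/N)·D)(f(0)) for every integer k with 0 ≤ k < N. In particular, L̂_D is injective if and only if exp(D) − id is injective. -/
open NormedSpace

/-- The discrete operator `L̂_D` on `Map(ZMod N, W)`:
`(L̂_D f)(t) = N • (exp(D/N)(f(t+1)) − f t)`. -/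
noncomputable def Lhat {W : Type*} [NormedAddCommGroup W] [NormedSpace ℝ W]
    (N : ℕ) (D : W →L[ℝ] W) (f : ZMod N → W) : ZMod N → W :=
  fun t => (N : ℝ) • (exp (((N : ℝ)⁻¹) • D) (f (t + 1)) - f t)

namespace LhatAux

variable {W : Type*} [NormedAddCommGroup W] [NormedSpace ℝ W] [FiniteDimensional ℝ W]

set_option synthInstance.maxHeartbeats 1000000 in
lemma exp_exp (D : W →L[ℝ] W) (a b : ℝ) (x : W) :
    exp (a • D) (exp (b • D) x) = exp ((a + b) • D) x := by
  letI : NormedAlgebra ℚ (W →L[ℝ] W) := NormedAlgebra.restrictScalars ℚ ℝ _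
  rw [add_smul, exp_add_of_commute (((Commute.refl D).smul_left a).smul_right b),
    ContinuousLinearMap.mul_apply]

omit [FiniteDimensional ℝ W] in
lemma exp_zero_smul (D : W →L[ℝ] W) (x : W) : exp ((0:ℝ) • D) x = x := by
  simp [exp_zero]

lemma cancel (D : W →L[ℝ] W) (a : ℝ) (x y : W) (hx : y = exp (a • D) x) :
    x = exp ((-a) • D) y := by
  rw [hx, exp_exp, neg_add_cancel, exp_zero_smul]

lemma ker_iff (N : ℕ) [NeZero N] (D : W →L[ℝ] W) (f : ZMod N → W) :
    Lhat N D f = 0 ↔ ∀ t : ZMod N, exp (((N:ℝ)⁻¹) • D) (f (t+1)) = f t := by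
  have hN : (N:ℝ) ≠ 0 := Nat.cast_ne_zero.mpr (NeZero.ne N)
  constructor
  · intro h t
    have h1 := congrFun h t
    simp only [Lhat, Pi.zero_apply, smul_eq_zero, sub_eq_zero] at h1
    tauto
  · intro h
    funext t
    simp [Lhat, h t]

lemma f0_eq (N : ℕ) [NeZero N] (D : W →L[ℝ] W) (f : ZMod N → W)
    (h : ∀ t : ZMod N, exp (((N:ℝ)⁻¹) • D) (f (t+1)) = f t) :
    ∀ k : ℕ, f 0 = exp (((k:ℝ)/(N:ℝ)) • D) (f ((k : ℕ) : ZMod N)) := by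
  have hN : (N:ℝ) ≠ 0 := Nat.cast_ne_zero.mpr (NeZero.ne N)
  intro k
  induction k with
  | zero => simp [exp_zero]
  | succ k ih =>
    have hk : ((k : ℕ) : ZMod N) + 1 = (((k+1 : ℕ)) : ZMod N) := by push_cast; ring
    have harg : (k:ℝ)/(N:ℝ) + (N:ℝ)⁻¹ = ((k+1 : ℕ):ℝ)/(N:ℝ) := by
      push_cast; field_simp
    rw [ih, ← h ((k : ℕ) : ZMod N), hk, exp_exp, harg]

end LhatAux

open LhatAux in
/-- A function `f : ZMod N → W` lies in the kernel of `L̂_D` iff `exp D` fixes `f 0` and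
`f (k mod N) = exp(−(k/N)•D) (f 0)` for all integers `0 ≤ k < N`; in particular `L̂_D` is
injective iff `exp D − id` is injective. -/
theorem lhat_kernel_characterization
    {W : Type*} [NormedAddCommGroup W] [NormedSpace ℝ W] [FiniteDimensional ℝ W]
    (N : ℕ) [NeZero N] (D : W →L[ℝ] W) :
    (∀ f : ZMod N → W,
        Lhat N D f = 0 ↔
          (exp D (f 0) = f 0 ∧
            ∀ k : ℤ, 0 ≤ k → k < (N : ℤ) →
              f (k : ZMod N) = exp (-(((k : ℝ) / (N : ℝ)) • D)) (f 0))) ∧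
    (Function.Injective (Lhat N D) ↔
      Function.Injective (fun x : W => exp D x - x)) := by
  have hN : (N:ℝ) ≠ 0 := Nat.cast_ne_zero.mpr (NeZero.ne N)
  have part1 : ∀ f : ZMod N → W,
      Lhat N D f = 0 ↔
        (exp D (f 0) = f 0 ∧
          ∀ k : ℤ, 0 ≤ k → k < (N : ℤ) →
            f (k : ZMod N) = exp (-(((k : ℝ) / (N : ℝ)) • D)) (f 0)) := by
    intro f
    rw [ker_iff]
    constructor
    · intro h
      have hfix : exp D (f 0) = f 0 := by
        have := f0_eq N D f h N
        rw [ZMod.natCast_self, div_self hN, one_smul] at this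
        exact this.symm
      refine ⟨hfix, fun k hk0 hkN => ?_⟩
      obtain ⟨n, rfl⟩ : ∃ n : ℕ, k = (n : ℤ) := ⟨k.toNat, (Int.toNat_of_nonneg hk0).symm⟩
      have hkn : (((n : ℤ)) : ZMod N) = ((n : ℕ) : ZMod N) := by push_cast; ring
      have hknR : (((n : ℤ)) : ℝ) = ((n : ℕ) : ℝ) := by push_cast; ring
      rw [hkn, hknR, ← neg_smul]
      exact cancel D ((n:ℝ)/(N:ℝ)) (f ((n : ℕ) : ZMod N)) (f 0) (f0_eq N D f h n)
    · rintro ⟨h1, h2⟩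
      have hnat : ∀ n : ℕ, n < N →
          f ((n : ℕ) : ZMod N) = exp ((-((n:ℝ)/(N:ℝ))) • D) (f 0) := by
        intro n hn
        have := h2 (n : ℤ) (Int.natCast_nonneg n) (by exact_mod_cast hn)
        rw [← neg_smul] at this
        push_cast at this
        exact this
      have hfix : exp ((-1 : ℝ) • D) (f 0) = f 0 :=
        (cancel D 1 (f 0) (f 0) (by rw [one_smul]; exact h1.symm)).symm
      intro t
      set n := t.val with hn
      have hnN : n < N := ZMod.val_lt t
      have ht : ((n : ℕ) : ZMod N) = t := ZMod.natCast_rightInverse t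
      rcases Nat.lt_or_ge (n + 1) N with hlt | hge
      · have ht1 : t + 1 = (((n + 1 : ℕ)) : ZMod N) := by rw [← ht]; push_cast; ring
        rw [ht1, hnat (n+1) hlt, ← ht, hnat n hnN, exp_exp]
        congr 2
        congr 1
        field_simp
        push_cast; ring
      · have hEq : n + 1 = N := le_antisymm (Nat.succ_le_of_lt hnN) hge
        have ht1 : t + 1 = 0 := by
          rw [← ht, ← Nat.cast_one, ← Nat.cast_add, hEq, ZMod.natCast_self]
        have hnR : (n : ℝ) = (N : ℝ) - 1 := by
          have := congrArg (Nat.cast : ℕ → ℝ) hEq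
          push_cast at this; linarith
        rw [ht1, ← hfix, exp_exp, ← ht, hnat n hnN]
        congr 2
        rw [hnR]
        field_simp
        ring_nf
  refine ⟨part1, ?_⟩
  -- linearity helpers
  have Lhat_zero : Lhat N D (0 : ZMod N → W) = 0 := by
    funext t; simp [Lhat]
  have Lhat_sub : ∀ f g : ZMod N → W, Lhat N D (f - g) = Lhat N D f - Lhat N D g := by
    intro f g; funext t
    simp only [Lhat, Pi.sub_apply, map_sub, smul_sub]
    abel
  have Lker : Function.Injective (Lhat N D) ↔ ∀ f : ZMod N → W, Lhat N D f = 0 → f = 0 := by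
    constructor
    · intro h f hf
      apply h; rw [hf, Lhat_zero]
    · intro h f g hfg
      have : Lhat N D (f - g) = 0 := by rw [Lhat_sub, hfg, sub_self]
      exact sub_eq_zero.mp (h _ this)
  have Gker : Function.Injective (fun x : W => exp D x - x) ↔
      ∀ x : W, exp D x = x → x = 0 := by
    constructor
    · intro h x hx
      apply h
      simp [hx]
    · intro h x y hxy
      simp only at hxy
      have : exp D (x - y) = x - y := by
        rw [map_sub]
        exact sub_eq_sub_iff_sub_eq_sub.mp hxy
      exact sub_eq_zero.mp (h _ this)
  rw [Lker, Gker]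
  constructor
  · intro hL x hx
    set f : ZMod N → W := fun t => exp ((-((t.val : ℝ)/(N:ℝ))) • D) x with hf
    have hf0 : f 0 = x := by
      rw [hf]; simp [ZMod.val_zero, exp_zero]
    have hker : Lhat N D f = 0 := by
      rw [part1 f]
      refine ⟨by rw [hf0, hx], fun k hk0 hkN => ?_⟩
      obtain ⟨m, rfl⟩ : ∃ m : ℕ, k = (m : ℤ) := ⟨k.toNat, (Int.toNat_of_nonneg hk0).symm⟩
      have hmN : m < N := by exact_mod_cast hkN
      have hc : (((m : ℤ)) : ZMod N) = ((m : ℕ) : ZMod N) := by push_cast; ring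
      have hcR : (((m : ℤ)) : ℝ) = ((m : ℕ) : ℝ) := by push_cast; ring
      rw [hf0, hc, hcR, hf]
      simp only [ZMod.val_cast_of_lt hmN, neg_smul]
    have := congrFun (hL f hker) 0
    rw [hf0] at this
    exact this
  · intro hG f hf
    obtain ⟨h1, h2⟩ := (part1 f).mp hf
    have hf0 : f 0 = 0 := hG _ h1
    funext t
    have ht : (((t.val : ℤ)) : ZMod N) = t := by
      exact_mod_cast ZMod.natCast_rightInverse t
    have := h2 (t.val : ℤ) (Int.natCast_nonneg _) (by exact_mod_cast ZMod.val_lt t)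
    rw [ht, hf0, map_zero] at this
    simpa using this
end

section
/- Let E be a finite-dimensional real inner product space, S a symmetric linear endomorphism of E, m ∈ E, and set n := dim(ker S). Then for every ε > 0 the function x ↦ exp(−ε‖x‖²) · exp(−(i/2)·⟨x − m, S(x − m)⟩) is integrable on E with respect to Lebesgue measure, and there exists a nonzero complex number c such that (ε/π)^{n/2} · ∫_E exp(−ε‖x‖²) · exp(−(i/2)·⟨x − m, S(x − m)⟩) dx converges to c as ε → 0⁺. -/
open MeasureTheory
open scoped RealInnerProductSpace

open Filter Complex in
private lemma osc_aux_int {E : Type*} [NormedAddCommGroup E] [InnerProductSpace ℝ E]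
    [FiniteDimensional ℝ E] [MeasurableSpace E] [BorelSpace E]
    (S : E →ₗ[ℝ] E) (m : E) {ι : Type*} [Fintype ι]
    (B : OrthonormalBasis ι ℝ E) (μ : ι → ℝ)
    (hB : ∀ (v : E) i, B.repr (S v) i = μ i * B.repr v i)
    {ε : ℝ} (hε : 0 < ε) :
    Integrable (fun x : E => (Real.exp (-ε * ‖x‖ ^ 2) : ℂ) *
        Complex.exp (-(Complex.I / 2) * ((⟪x - m, S (x - m)⟫ : ℝ) : ℂ))) ∧
    ∫ x : E, (Real.exp (-ε * ‖x‖ ^ 2) : ℂ) *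
        Complex.exp (-(Complex.I / 2) * ((⟪x - m, S (x - m)⟫ : ℝ) : ℂ)) =
      ∏ i, ((Real.pi : ℂ) / ((ε : ℂ) + Complex.I * μ i / 2)) ^ ((1:ℂ)/2) *
        Complex.exp (-(Complex.I / 2) * ε * μ i * (B.repr m i : ℂ)^2 /
          ((ε : ℂ) + Complex.I * μ i / 2)) := by
  set f : E → ℂ := fun x : E => (Real.exp (-ε * ‖x‖ ^ 2) : ℂ) *
        Complex.exp (-(Complex.I / 2) * ((⟪x - m, S (x - m)⟫ : ℝ) : ℂ)) with hf
  set c : ι → ℝ := fun i => B.repr m i with hc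
  have hbre : ∀ i, 0 < ((ε : ℂ) + Complex.I * μ i / 2).re := by
    intro i
    simp only [Complex.add_re, Complex.ofReal_re, Complex.div_re, Complex.mul_re,
      Complex.I_re, Complex.I_im, Complex.ofReal_im]
    norm_num [hε]
  have hbne : ∀ i, (ε : ℂ) + Complex.I * μ i / 2 ≠ 0 := fun i h => by
    have := hbre i; rw [h] at this; simp at this
  have hnorm : ∀ w : EuclideanSpace ℝ ι, ‖w‖^2 = ∑ i, (w i)^2 := fun w => by
    rw [EuclideanSpace.norm_eq, Real.sq_sqrt (Finset.sum_nonneg fun i _ => by positivity)]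
    simp [sq_abs]
  have hinner : ∀ y : E, ⟪y, S y⟫ = ∑ i, μ i * (B.repr y i)^2 := by
    intro y
    rw [← B.repr.inner_map_map y (S y)]
    rw [PiLp.inner_apply]
    exact Finset.sum_congr rfl fun i _ => by rw [RCLike.inner_apply, conj_trivial, hB]; ring
  set g : EuclideanSpace ℝ ι → ℂ := fun w =>
      Complex.exp (-∑ i, ((ε : ℂ) + Complex.I * μ i / 2) * (w i : ℂ)^2 +
        ∑ i, ((-2*ε*c i : ℝ) : ℂ) * (w i : ℂ)) *
        Complex.exp (-(ε:ℂ) * ∑ i, (c i : ℂ)^2) with hg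
  have key : ∀ y : E, f (y + m) = g (B.repr y) := by
    intro y
    have h1 : ‖y + m‖^2 = ∑ i, (B.repr y i + c i)^2 := by
      rw [← B.repr.norm_map (y + m), hnorm]
      simp [hc]
    simp only [hf, hg, add_sub_cancel_right, h1, hinner y]
    rw [Complex.ofReal_exp, ← Complex.exp_add, ← Complex.exp_add]
    push_cast
    congr 1
    rw [Finset.mul_sum, Finset.mul_sum, Finset.mul_sum, ← Finset.sum_neg_distrib,
      ← Finset.sum_add_distrib, ← Finset.sum_add_distrib, ← Finset.sum_add_distrib]
    exact Finset.sum_congr rfl fun i _ => by ring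
  have hgpi : Integrable (fun v : ι → ℝ => g ((MeasurableEquiv.toLp 2 (ι → ℝ)) v)) :=
    (GaussianFourier.integrable_cexp_neg_sum_mul_add hbre
      (fun i => ((-2*ε*c i : ℝ) : ℂ))).mul_const _
  have hgE : Integrable g :=
    ((MeasurePreserving.symm _
      (EuclideanSpace.volume_preserving_symm_measurableEquiv_toLp ι)).integrable_comp_emb
      (MeasurableEquiv.measurableEmbedding _)).mp hgpi
  have hfm : Integrable (fun y => f (y + m)) := by
    have := (B.measurePreserving_repr.integrable_comp_emb
      B.repr.toHomeomorph.measurableEmbedding (g := g)).mpr hgE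
    exact this.congr (Filter.EventuallyEq.of_eq (funext fun y => (key y).symm))
  have hfInt : Integrable f := by
    have := (measurePreserving_add_right (volume : Measure E) m).integrable_comp_emb
      (MeasurableEquiv.addRight m).measurableEmbedding (g := f)
    exact this.mp hfm
  refine ⟨hfInt, ?_⟩
  calc ∫ x : E, f x = ∫ y : E, f (y + m) := (integral_add_right_eq_self f m).symm
    _ = ∫ y : E, g (B.repr y) :=
        integral_congr_ae (Filter.EventuallyEq.of_eq (funext key))
    _ = ∫ w : EuclideanSpace ℝ ι, g w :=
        B.measurePreserving_repr.integral_comp B.repr.toHomeomorph.measurableEmbedding _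
    _ = ∫ v : ι → ℝ, g ((MeasurableEquiv.toLp 2 (ι → ℝ)) v) :=
        ((MeasurePreserving.symm _
          (EuclideanSpace.volume_preserving_symm_measurableEquiv_toLp ι)).integral_comp
          (MeasurableEquiv.measurableEmbedding _) _).symm
    _ = (∫ v : ι → ℝ, Complex.exp (-∑ i, ((ε : ℂ) + Complex.I * μ i / 2) * (v i : ℂ)^2 +
          ∑ i, ((-2*ε*c i : ℝ) : ℂ) * (v i : ℂ))) *
          Complex.exp (-(ε:ℂ) * ∑ i, (c i : ℂ)^2) := by
        simp only [hg, MeasurableEquiv.toLp_apply, PiLp.toLp_apply]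
        rw [integral_mul_const]
    _ = (∏ i, (↑Real.pi / ((ε : ℂ) + Complex.I * μ i / 2)) ^ ((1:ℂ) / 2) *
          Complex.exp ((((-2*ε*c i : ℝ) : ℂ)) ^ 2 / (4 * ((ε : ℂ) + Complex.I * μ i / 2)))) *
          Complex.exp (-(ε:ℂ) * ∑ i, (c i : ℂ)^2) := by
        rw [GaussianFourier.integral_cexp_neg_sum_mul_add hbre]
    _ = _ := by
        rw [Finset.mul_sum, Complex.exp_sum, ← Finset.prod_mul_distrib]
        refine Finset.prod_congr rfl fun i _ => ?_
        rw [mul_assoc, ← Complex.exp_add]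
        congr 2
        have h4 : (4:ℂ) * ((ε:ℂ) + Complex.I * μ i / 2) ≠ 0 :=
          mul_ne_zero (by norm_num) (hbne i)
        rw [div_add' _ _ _ h4, div_eq_div_iff h4 (hbne i)]
        push_cast
        ring

open Filter Complex in
private lemma osc_aux_ker {E : Type*} [NormedAddCommGroup E] [InnerProductSpace ℝ E]
    (S : E →ₗ[ℝ] E) {ι : Type*} [Fintype ι]
    (B : OrthonormalBasis ι ℝ E) (μ : ι → ℝ)
    (hB : ∀ (v : E) i, B.repr (S v) i = μ i * B.repr v i) :
    Module.finrank ℝ (LinearMap.ker S) = Nat.card {i // μ i = 0} := by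
  classical
  have hker : ∀ x : E, x ∈ LinearMap.ker S ↔ ∀ i, μ i * B.repr x i = 0 := by
    intro x
    rw [LinearMap.mem_ker, ← B.repr.map_eq_zero_iff]
    constructor
    · intro h i
      rw [← hB, h]
      rfl
    · intro h
      ext i
      rw [hB, h i]
      rfl
  have hspan : LinearMap.ker S = Submodule.span ℝ (B '' {i | μ i = 0}) := by
    apply le_antisymm
    · intro x hx
      have hx' := (hker x).mp hx
      rw [← B.sum_repr x]
      refine Submodule.sum_mem _ fun i _ => ?_
      by_cases h : μ i = 0
      · exact Submodule.smul_mem _ _ (Submodule.subset_span ⟨i, h, rfl⟩)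
      · have h0 : B.repr x i = 0 := by
          rcases mul_eq_zero.mp (hx' i) with h' | h'
          · exact absurd h' h
          · exact h'
        rw [h0, zero_smul]
        exact Submodule.zero_mem _
    · rw [Submodule.span_le]
      rintro _ ⟨i, hi, rfl⟩
      rw [SetLike.mem_coe, hker]
      intro j
      rw [B.repr_self]
      rcases eq_or_ne j i with rfl | hji
      · simp [Set.mem_setOf_eq.mp hi]
      · simp [EuclideanSpace.single_apply, hji]
  have hli : LinearIndependent ℝ (fun i : {i // μ i = 0} => B i) :=
    B.orthonormal.linearIndependent.comp _ Subtype.val_injective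
  have hset : Set.range (fun i : {i // μ i = 0} => B i) = B '' {i | μ i = 0} := by
    ext x
    constructor
    · rintro ⟨⟨i, hi⟩, rfl⟩
      exact ⟨i, hi, rfl⟩
    · rintro ⟨i, hi, rfl⟩
      exact ⟨⟨i, hi⟩, rfl⟩
  rw [hspan, Nat.card_eq_fintype_card, ← finrank_span_eq_card hli, hset]

open Filter Complex in
private lemma osc_aux_lim (μi ci : ℝ) :
    Tendsto (fun ε : ℝ =>
      (if μi = 0 then (((ε / Real.pi) ^ ((2:ℝ))⁻¹ : ℝ) : ℂ) else 1) *
      (((Real.pi : ℂ) / ((ε : ℂ) + Complex.I * μi / 2)) ^ ((1:ℂ)/2) *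
        Complex.exp (-(Complex.I / 2) * ε * μi * (ci : ℂ)^2 / ((ε : ℂ) + Complex.I * μi / 2))))
      (nhdsWithin 0 (Set.Ioi 0))
      (nhds (if μi = 0 then 1 else ((Real.pi : ℂ) / (Complex.I * μi / 2)) ^ ((1:ℂ)/2))) := by
  by_cases h : μi = 0
  · simp only [h, if_true, Complex.ofReal_zero, mul_zero, zero_mul, zero_div, mul_comm]
    apply Tendsto.congr' _ tendsto_const_nhds
    filter_upwards [self_mem_nhdsWithin] with ε (hε : ε ∈ Set.Ioi (0:ℝ))
    have hε' : (0:ℝ) < ε := hε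
    have e0 : ((Real.pi:ℂ) / ((ε:ℂ) + 0)) = ((Real.pi / ε : ℝ) : ℂ) := by push_cast; ring
    rw [Complex.exp_zero, one_mul, e0]
    rw [show ((1:ℂ)/2) = (((2:ℝ)⁻¹ : ℝ) : ℂ) by norm_num]
    rw [← Complex.ofReal_cpow (by positivity : (0:ℝ) ≤ Real.pi / ε) ((2:ℝ)⁻¹),
      ← Complex.ofReal_mul, ← Real.mul_rpow (by positivity) (by positivity)]
    have e3 : Real.pi / ε * (ε / Real.pi) = 1 := by
      field_simp
    rw [e3, Real.one_rpow, Complex.ofReal_one]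
  · simp only [h, if_false, one_mul]
    have hd : Complex.I * (μi : ℂ) / 2 ≠ 0 :=
      div_ne_zero (mul_ne_zero Complex.I_ne_zero (Complex.ofReal_ne_zero.mpr h)) two_ne_zero
    have hcoer : Tendsto (fun ε : ℝ => ((ε : ℂ))) (nhds 0) (nhds 0) := by
      simpa using Complex.continuous_ofReal.tendsto 0
    have hden : Tendsto (fun ε : ℝ => ((ε : ℂ) + Complex.I * μi / 2)) (nhds 0)
        (nhds (Complex.I * μi / 2)) := by
      simpa using hcoer.add tendsto_const_nhds
    have hbase : Tendsto (fun ε : ℝ => (Real.pi : ℂ) / ((ε : ℂ) + Complex.I * μi / 2)) (nhds 0)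
        (nhds ((Real.pi : ℂ) / (Complex.I * μi / 2))) := tendsto_const_nhds.div hden hd
    have him : ((Real.pi : ℂ) / (Complex.I * (μi : ℂ) / 2)).im ≠ 0 := by
      rw [Complex.div_im]
      simp [Complex.normSq_apply, Real.pi_ne_zero, h, Real.pi_pos.ne']
    have hcpow : Tendsto (fun ε : ℝ =>
        ((Real.pi : ℂ) / ((ε : ℂ) + Complex.I * μi / 2)) ^ ((1:ℂ)/2))
        (nhds 0) (nhds (((Real.pi : ℂ) / (Complex.I * μi / 2)) ^ ((1:ℂ)/2))) :=
      ((continuousAt_cpow_const (Complex.mem_slitPlane_iff.mpr (Or.inr him))).tendsto).comp hbase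
    have hnum : Tendsto (fun ε : ℝ => -(Complex.I / 2) * (ε:ℂ) * μi * (ci : ℂ)^2)
        (nhds 0) (nhds 0) := by
      have := hcoer.mul_const (-(Complex.I / 2) * (μi:ℂ) * (ci : ℂ)^2)
      rw [zero_mul] at this
      exact this.congr fun ε => by ring
    have hexp : Tendsto (fun ε : ℝ =>
        Complex.exp (-(Complex.I / 2) * ε * μi * (ci : ℂ)^2 / ((ε : ℂ) + Complex.I * μi / 2)))
        (nhds 0) (nhds 1) := by
      have hfrac := hnum.div hden hd
      rw [zero_div] at hfrac
      simpa [Function.comp_def] using (Complex.continuous_exp.tendsto 0).comp hfrac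
    have := hcpow.mul hexp
    rw [mul_one] at this
    exact this.mono_left nhdsWithin_le_nhds

/-- For an oscillatory Gauss-type measure with symmetric `S` and mean `m` on a
finite-dimensional real inner product space `E`, the regularized integrand
`x ↦ exp(−ε‖x‖²)·exp(−(i/2)⟨x−m, S(x−m)⟩)` is integrable for every `ε > 0`, and
`(ε/π)^{n/2} ∫ exp(−ε‖x‖²) exp(−(i/2)⟨x−m,S(x−m)⟩) dx` (with `n = dim ker S`) converges
to a nonzero complex number as `ε → 0⁺`. -/
theorem oscillatory_gauss_improper_integral_exists
    {E : Type*} [NormedAddCommGroup E] [InnerProductSpace ℝ E] [FiniteDimensional ℝ E]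
    [MeasurableSpace E] [BorelSpace E]
    (S : E →ₗ[ℝ] E) (hS : ∀ x y : E, ⟪S x, y⟫ = ⟪x, S y⟫) (m : E) :
    (∀ ε : ℝ, 0 < ε →
      Integrable (fun x : E =>
        (Real.exp (-ε * ‖x‖ ^ 2) : ℂ) *
          Complex.exp (-(Complex.I / 2) * ((⟪x - m, S (x - m)⟫ : ℝ) : ℂ)))) ∧
    ∃ c : ℂ, c ≠ 0 ∧
      Filter.Tendsto
        (fun ε : ℝ =>
          ((((ε / Real.pi) ^ ((Module.finrank ℝ (LinearMap.ker S) : ℝ) / 2) : ℝ)) : ℂ) *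
            ∫ x : E,
              (Real.exp (-ε * ‖x‖ ^ 2) : ℂ) *
                Complex.exp (-(Complex.I / 2) * ((⟪x - m, S (x - m)⟫ : ℝ) : ℂ)))
        (nhdsWithin 0 (Set.Ioi 0)) (nhds c) := by
  classical
  have hsym : S.IsSymmetric := hS
  set B := hsym.eigenvectorBasis rfl with hBdef
  set μ := hsym.eigenvalues rfl with hμdef
  have hB : ∀ (v : E) i, B.repr (S v) i = μ i * B.repr v i :=
    fun v i => hsym.eigenvectorBasis_apply_self_apply rfl v i
  refine ⟨fun ε hε => (osc_aux_int S m B μ hB hε).1, ?_⟩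
  refine ⟨∏ i, (if μ i = 0 then 1 else
      ((Real.pi : ℂ) / (Complex.I * μ i / 2)) ^ ((1:ℂ)/2)), ?_, ?_⟩
  · rw [Finset.prod_ne_zero_iff]
    intro i _
    split
    · exact one_ne_zero
    · rename_i h
      intro hz
      rcases (Complex.cpow_eq_zero_iff _ _).mp hz with ⟨h0, -⟩
      exact (div_ne_zero (Complex.ofReal_ne_zero.mpr Real.pi_ne_zero)
        (div_ne_zero (mul_ne_zero Complex.I_ne_zero (Complex.ofReal_ne_zero.mpr h))
          two_ne_zero)) h0
  · have hlim := tendsto_finset_prod (f := fun i (ε : ℝ) =>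
        (if μ i = 0 then (((ε / Real.pi) ^ ((2:ℝ))⁻¹ : ℝ) : ℂ) else 1) *
        (((Real.pi : ℂ) / ((ε : ℂ) + Complex.I * μ i / 2)) ^ ((1:ℂ)/2) *
          Complex.exp (-(Complex.I / 2) * ε * μ i * (B.repr m i : ℂ)^2 /
            ((ε : ℂ) + Complex.I * μ i / 2))))
      (Finset.univ) (fun i _ => osc_aux_lim (μ i) (B.repr m i))
    refine Filter.Tendsto.congr' ?_ hlim
    filter_upwards [self_mem_nhdsWithin] with ε (hε : ε ∈ Set.Ioi (0:ℝ))
    have hε' : (0:ℝ) < ε := hε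
    rw [(osc_aux_int S m B μ hB hε').2, Finset.prod_mul_distrib]
    congr 1
    rw [Finset.prod_ite, Finset.prod_const, Finset.prod_const, one_pow, mul_one]
    have hn : Module.finrank ℝ (LinearMap.ker S) =
        (Finset.univ.filter fun i => μ i = 0).card := by
      rw [osc_aux_ker S B μ hB, Nat.card_eq_fintype_card, Fintype.card_subtype]
    set k := (Finset.univ.filter fun i => μ i = 0).card with hk
    have hx : (0:ℝ) ≤ ε / Real.pi := by positivity
    rw [hn, show ((k:ℝ)/2) = (2:ℝ)⁻¹ * (k:ℝ) by ring, Real.rpow_mul hx,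
      Real.rpow_natCast, Complex.ofReal_pow]
end
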